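/- For every n ∈ ℕ and every real x, K^{(β)}_{n,λ}(x) = Σ_{k=0}^n C(n,k) · [ Σ_{i=0}^{n−k} (−1)^i i! · B_{n−k,i}(g_1, …, g_{n−k−i+1}) ] · [x]_k. -/

import Mathlib

open Finset

/-- degenerate Krawtchouk Appell polynomials -/
noncomputable def K (lam β q r : ℝ) (n : ℕ) (x : ℝ) : ℝ :=
  iteratedDeriv n
    (fun t : ℝ => ((1 + t) / (1 + q * t)) ^ x *
      (1 + lam * r * Real.log (1 + q * t)) ^ (-β / lam)) 0

/-- derivatives at 0 of the Laplace transform composed with `log(1+qt)` -/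
noncomputable def gg (lam β q r : ℝ) (m : ℕ) : ℝ :=
  iteratedDeriv m (fun t : ℝ => (1 + lam * r * Real.log (1 + q * t)) ^ (β / lam)) 0

/-- partial exponential Bell polynomials -/
noncomputable def Bell (n k : ℕ) (x : ℕ → ℝ) : ℝ :=
  ∑ i ∈ (Fintype.piFinset fun _ : Fin (n - k + 1) => Finset.range (n + 1)).filter
      (fun i => (∑ j : Fin (n - k + 1), i j) = k ∧ (∑ j : Fin (n - k + 1), ((j : ℕ) + 1) * i j) = n),
    (n.factorial : ℝ) / (∏ j : Fin (n - k + 1), ((i j).factorial : ℝ)) *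
      ∏ j : Fin (n - k + 1), (x ((j : ℕ) + 1) / (((j : ℕ) + 1).factorial : ℝ)) ^ i j

/-- classical falling factorial -/
noncomputable def ff (y : ℝ) (m : ℕ) : ℝ := ∏ i ∈ Finset.range m, (y - i)

/-- the bracket `[y]_n` -/
noncomputable def br (q y : ℝ) (n : ℕ) : ℝ :=
  ∑ k ∈ Finset.range (n + 1), (n.choose k : ℝ) * q ^ k * ff y (n - k) * ff (-y) k

/-!
Write the generating function near `t = 0` as `F t * G t` with `F t = (1 + q t)^(-x) (1 + t)^x`
and `G = 1 / H`, `H t = (1 + λ r log (1 + q t))^(β/λ)`. By Leibniz' rule it suffices to know the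
derivatives of both factors at `0`. Leibniz again, applied to the two binomial factors of `F`,
gives `F⁽ᵏ⁾(0) = [x]_k`. For `G`, the exponential generating function of the derivatives of `H`
at `0` is `1 + Q` with `Q = ∑_{j ≥ 1} g_j tʲ / j!`, so that of `G` is
`(1 + Q)⁻¹ = ∑ᵢ (-Q)ⁱ`; by the multinomial theorem the coefficient of `tᵐ` in `Qⁱ` is
`i! / m! · B_{m,i}(g_1, g_2, …)`.
-/

open PowerSeries Topology
open scoped Nat ContDiff

theorem pow_add_dvd_pow_succ_sub_pow_succ {R : Type*} [CommRing R] {t a b : R} {d : ℕ}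
    (ha : t ∣ a) (hb : t ∣ b) (hab : t ^ d ∣ a - b) (k : ℕ) :
    t ^ (d + k) ∣ a ^ (k + 1) - b ^ (k + 1) := by
  induction k with
  | zero => simpa using hab
  | succ k ih =>
    rw [show a ^ (k + 2) - b ^ (k + 2) =
      a ^ (k + 1) * (a - b) + (a ^ (k + 1) - b ^ (k + 1)) * b by ring]
    refine dvd_add ?_ ?_
    · rw [show d + (k + 1) = (k + 1) + d by omega, pow_add]
      exact mul_dvd_mul (pow_dvd_pow_of_dvd ha _) hab
    · rw [← add_assoc, pow_succ]
      exact mul_dvd_mul ih hb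

theorem PowerSeries.coeff_eq_sum_of_one_add_mul_eq_one {R : Type*} [CommRing R] {Q f : R⟦X⟧}
    (hQ : constantCoeff Q = 0) (h : (1 + Q) * f = 1) (m : ℕ) :
    coeff m f = ∑ i ∈ range (m + 1), (-1) ^ i * coeff m (Q ^ i) := by
  set S := ∑ i ∈ range (m + 1), (-Q) ^ i
  have hS : (1 + Q) * S = 1 - (-Q) ^ (m + 1) := by
    simpa using mul_neg_geom_sum (-Q) (m + 1)
  have hf : f = S + f * (-Q) ^ (m + 1) := calc
    f = f * ((1 + Q) * S) + f * (-Q) ^ (m + 1) := by rw [hS]; ring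
    _ = S + f * (-Q) ^ (m + 1) := by rw [← mul_assoc, mul_comm f, h, one_mul]
  have htail : coeff m (f * (-Q) ^ (m + 1)) = 0 := by
    refine X_pow_dvd_iff.mp (dvd_mul_of_dvd_right (pow_dvd_pow_of_dvd ?_ _) _) m (by omega)
    rwa [X_dvd_iff, map_neg, neg_eq_zero]
  rw [hf, map_add, htail, add_zero, map_sum]
  refine sum_congr rfl fun i _ => ?_
  rw [neg_pow, show (-1 : R⟦X⟧) ^ i = C ((-1) ^ i) by simp, coeff_C_mul]

section egf

variable {K : Type*} [Field K]

noncomputable def egf (a : ℕ → K) : K⟦X⟧ := mk fun n => a n / n !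

theorem coeff_egf (a : ℕ → K) (n : ℕ) : coeff n (egf a) = a n / n ! :=
  coeff_mk _ _

theorem egf_mul [CharZero K] (a b : ℕ → K) :
    egf a * egf b = egf fun n => ∑ k ∈ range (n + 1), (n.choose k : K) * a k * b (n - k) := by
  ext n
  rw [coeff_mul, Nat.sum_antidiagonal_eq_sum_range_succ_mk, coeff_egf, sum_div]
  refine sum_congr rfl fun k hk => ?_
  rw [coeff_egf, coeff_egf, Nat.cast_choose K (by simpa [Nat.lt_succ_iff] using hk)]
  have : (n ! : K) ≠ 0 := Nat.cast_ne_zero.mpr n.factorial_ne_zero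
  field_simp

theorem X_pow_dvd_egf_sub_sum (x : ℕ → K) (N : ℕ) :
    X ^ (N + 1) ∣ egf x - C (x 0) - ∑ j : Fin N, monomial (j + 1) (x (j + 1) / (j + 1)!) := by
  refine X_pow_dvd_iff.mpr fun m hm => ?_
  rw [map_sub, map_sub, map_sum, coeff_egf, coeff_C]
  simp only [coeff_monomial]
  rcases m with _ | m
  · simp
  · rw [Fintype.sum_eq_single ⟨m, by omega⟩
      fun j hj => if_neg fun h => hj (Fin.ext (by dsimp only; omega))]
    simp

end egf

theorem factorial_mul_bell_eq_coeff_pow (x : ℕ → ℝ) (n k : ℕ) :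
    k ! * Bell n k x =
      n ! * coeff n ((∑ j : Fin (n - k + 1), monomial (j + 1) (x (j + 1) / (j + 1)!)) ^ k) := by
  rw [sum_pow_eq_sum_piAntidiag]
  simp_rw [monomial_pow, prod_monomial, ← map_natCast (C (R := ℝ)), ← monomial_zero_eq_C,
    monomial_mul_monomial, zero_add, map_sum, coeff_monomial, sum_ite, sum_const_zero, add_zero]
  rw [Bell, mul_sum, mul_sum]
  refine sum_congr ?_ fun i hi => ?_
  · ext i
    simp only [mem_filter, Fintype.mem_piFinset, mem_range, mem_piAntidiag, mem_univ,
      ne_eq, imp_true_iff, and_true]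
    have hweight : ∑ j, i j * ((j : ℕ) + 1) = ∑ j : Fin (n - k + 1), ((j : ℕ) + 1) * i j :=
      sum_congr rfl fun j _ => mul_comm _ _
    rw [hweight, eq_comm (a := n)]
    refine ⟨fun h => h.2, fun ⟨hk, hn⟩ => ⟨fun j => ?_, hk, hn⟩⟩
    calc i j ≤ ((j : ℕ) + 1) * i j := Nat.le_mul_of_pos_left _ j.succ_pos
      _ ≤ ∑ j : Fin (n - k + 1), ((j : ℕ) + 1) * i j :=
          single_le_sum (f := fun j : Fin (n - k + 1) => ((j : ℕ) + 1) * i j)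
            (fun _ _ => Nat.zero_le _) (mem_univ j)
      _ < n + 1 := by omega
  · have hspec := Nat.multinomial_spec univ i
    rw [(mem_piAntidiag.mp (mem_filter.mp hi).1).1] at hspec
    have hP : (∏ j, (i j)! : ℝ) ≠ 0 := by positivity
    rw [← Nat.cast_inj (R := ℝ), Nat.cast_mul, Nat.cast_prod] at hspec
    rw [← hspec]
    field_simp

/- Only the first `n - k + 1` terms of `Q = egf x - x 0` enter `Bell n k x`; the others change
`Qᵏ` only in degrees above `n`, since `Q` and its truncation are both divisible by `X`. -/
theorem factorial_mul_bell_eq (x : ℕ → ℝ) (n k : ℕ) :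
    k ! * Bell n k x = n ! * coeff n ((egf x - C (x 0)) ^ k) := by
  rw [factorial_mul_bell_eq_coeff_pow]
  congr 1
  rcases k with _ | k
  · simp
  have hQ : X ∣ egf x - C (x 0) := by
    rw [X_dvd_iff, ← coeff_zero_eq_constantCoeff_apply, map_sub, coeff_egf, coeff_C]
    simp
  have hP : X ∣ ∑ j : Fin (n - (k + 1) + 1), monomial (j + 1) (x (j + 1) / (j + 1)!) := by
    rw [X_dvd_iff, ← coeff_zero_eq_constantCoeff_apply, map_sum]
    simp [coeff_monomial]
  have hdvd := pow_add_dvd_pow_succ_sub_pow_succ hP hQ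
    (dvd_sub_comm.mp (X_pow_dvd_egf_sub_sum x (n - (k + 1) + 1))) k
  rw [← sub_eq_zero, ← map_sub]
  exact X_pow_dvd_iff.mp hdvd n (by omega)

theorem eq_sum_bell_of_egf_mul_eq_one {h a : ℕ → ℝ} (h0 : h 0 = 1) (hmul : egf h * egf a = 1)
    (m : ℕ) : a m = ∑ i ∈ range (m + 1), (-1) ^ i * i ! * Bell m i h := by
  have hQ : constantCoeff (egf h - C (h 0)) = 0 := by
    rw [← coeff_zero_eq_constantCoeff_apply, map_sub, coeff_egf, coeff_C]
    simp
  have hinv : (1 + (egf h - C (h 0))) * egf a = 1 := by rwa [h0, map_one, add_sub_cancel]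
  have hcoeff := coeff_eq_sum_of_one_add_mul_eq_one hQ hinv m
  rw [coeff_egf, div_eq_iff (Nat.cast_ne_zero.mpr m.factorial_ne_zero)] at hcoeff
  rw [hcoeff, sum_mul]
  refine sum_congr rfl fun i _ => ?_
  rw [mul_assoc _ (i ! : ℝ), factorial_mul_bell_eq]
  ring

theorem iteratedDeriv_eq_sum_bell_of_mul_eventuallyEq_one {f g : ℝ → ℝ} {a : ℝ}
    (hf : ContDiffAt ℝ ∞ f a) (hg : ContDiffAt ℝ ∞ g a) (hfa : f a = 1)
    (hfg : f * g =ᶠ[𝓝 a] 1) (m : ℕ) :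
    iteratedDeriv m g a =
      ∑ i ∈ range (m + 1), (-1) ^ i * i ! * Bell m i (fun j => iteratedDeriv j f a) := by
  refine eq_sum_bell_of_egf_mul_eq_one (h := fun j => iteratedDeriv j f a)
    (a := fun j => iteratedDeriv j g a) (by rwa [iteratedDeriv_zero]) ?_ m
  ext n
  rw [egf_mul, coeff_egf,
    ← iteratedDeriv_mul (hf.of_le (mod_cast le_top)) (hg.of_le (mod_cast le_top)),
    hfg.iteratedDeriv_eq, Pi.one_def, iteratedDeriv_const, coeff_one]
  split_ifs <;> simp_all

theorem ff_succ (y : ℝ) (m : ℕ) : ff y (m + 1) = y * ff (y - 1) m := by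
  rw [ff, ff, prod_range_succ', mul_comm]
  simp only [Nat.cast_add, Nat.cast_one, CharP.cast_eq_zero, sub_zero]
  exact congrArg (y * ·) (prod_congr rfl fun i _ => by ring)

theorem iteratedDeriv_one_add_mul_rpow (c : ℝ) (m : ℕ) {y t : ℝ} (ht : 0 < 1 + c * t) :
    iteratedDeriv m (fun t => (1 + c * t) ^ y) t = c ^ m * ff y m * (1 + c * t) ^ (y - m) := by
  induction m generalizing y with
  | zero => simp [ff]
  | succ m ih =>
    have hev : deriv (fun s => (1 + c * s) ^ y) =ᶠ[𝓝 t]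
        fun s => c * y * (1 + c * s) ^ (y - 1) := by
      filter_upwards [continuousAt_const.eventually_lt
        (by fun_prop : Continuous fun s : ℝ => 1 + c * s).continuousAt ht] with s hs
      have hlin : HasDerivAt (fun s => 1 + c * s) c s := by
        simpa using ((hasDerivAt_id s).const_mul c).const_add 1
      rw [(hlin.rpow_const (p := y) (Or.inl hs.ne')).deriv]
    rw [iteratedDeriv_succ', hev.iteratedDeriv_eq, iteratedDeriv_const_mul_field, ih, ff_succ]
    push_cast
    ring_nf

theorem iteratedDeriv_krawtchouk_factor (q x : ℝ) (k : ℕ) :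
    iteratedDeriv k (fun t => (1 + q * t) ^ (-x) * (1 + t) ^ x) 0 = br q x k := by
  have hq : ContDiffAt ℝ k (fun t : ℝ => (1 + q * t) ^ (-x)) 0 := by fun_prop (disch := simp)
  have h1 : ContDiffAt ℝ k (fun t : ℝ => (1 + t) ^ x) 0 := by fun_prop (disch := simp)
  rw [iteratedDeriv_fun_mul hq h1, br]
  refine sum_congr rfl fun j _ => ?_
  have h1j := iteratedDeriv_one_add_mul_rpow 1 (k - j) (y := x) (t := 0) (by norm_num)
  simp only [one_mul, one_pow, mul_zero, add_zero, Real.one_rpow, mul_one] at h1j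
  rw [iteratedDeriv_one_add_mul_rpow q j (by simp), h1j]
  simp only [mul_zero, add_zero, Real.one_rpow, mul_one]
  ring

theorem stmt16_general (lam β q r : ℝ) (n : ℕ) (x : ℝ) :
    K lam β q r n x
      = ∑ k ∈ Finset.range (n + 1),
          (n.choose k : ℝ) *
            (∑ i ∈ Finset.range (n - k + 1),
              (-1 : ℝ) ^ i * i.factorial * Bell (n - k) i (gg lam β q r)) *
          br q x k := by
  have hu : ContDiffAt ℝ ∞ (fun t => 1 + lam * r * Real.log (1 + q * t)) 0 := by
    fun_prop (disch := simp)
  have hpos : ∀ᶠ t in 𝓝 (0 : ℝ),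
      0 < 1 + lam * r * Real.log (1 + q * t) ∧ 0 < 1 + t ∧ 0 < 1 + q * t :=
    (continuousAt_const.eventually_lt hu.continuousAt (by simp)).and
      ((continuousAt_const.eventually_lt (by fun_prop) (by simp)).and
        (continuousAt_const.eventually_lt (by fun_prop) (by simp)))
  have hsplit : (fun t : ℝ => ((1 + t) / (1 + q * t)) ^ x *
        (1 + lam * r * Real.log (1 + q * t)) ^ (-β / lam)) =ᶠ[𝓝 0]
      (fun t => (1 + q * t) ^ (-x) * (1 + t) ^ x) *
        fun t => (1 + lam * r * Real.log (1 + q * t)) ^ (-β / lam) := by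
    filter_upwards [hpos] with t ⟨_, h1, hq⟩
    rw [Pi.mul_apply, Real.div_rpow h1.le hq.le, Real.rpow_neg hq.le, div_eq_inv_mul]
  have hG_smooth : ContDiffAt ℝ ∞
      (fun t => (1 + lam * r * Real.log (1 + q * t)) ^ (-β / lam)) 0 :=
    hu.rpow_const_of_ne (by simp)
  have hG (m : ℕ) := iteratedDeriv_eq_sum_bell_of_mul_eventuallyEq_one
    (f := fun t => (1 + lam * r * Real.log (1 + q * t)) ^ (β / lam))
    (hu.rpow_const_of_ne (by simp)) hG_smooth (by simp)
    (hpos.mono fun t ht => by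
      simp only [Pi.mul_apply, Pi.one_apply, ← Real.rpow_add ht.1, neg_div, add_neg_cancel,
        Real.rpow_zero]) m
  rw [K, hsplit.iteratedDeriv_eq,
    iteratedDeriv_mul (by fun_prop (disch := simp)) (hG_smooth.of_le (mod_cast le_top))]
  refine sum_congr rfl fun k _ => ?_
  rw [iteratedDeriv_krawtchouk_factor, hG]
  exact mul_right_comm _ _ _

theorem stmt16 (lam β p q r : ℝ) (hlam : lam < 0) (hβ : 0 < β)
    (hp : 0 < p) (hp1 : p < 1) (hq : q = 1 - p) (hr : 0 < r) (n : ℕ) (x : ℝ) :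
    K lam β q r n x
      = ∑ k ∈ Finset.range (n + 1),
          (n.choose k : ℝ) *
            (∑ i ∈ Finset.range (n - k + 1),
              (-1 : ℝ) ^ i * i.factorial * Bell (n - k) i (gg lam β q r)) *
          br q x k :=
  stmt16_general lam β q r n x
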